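/- arXiv:2603.22202 — 5 statements merged into one kernel-verified Lean document; each statement's English description precedes it below -/
import Mathlib

section
/- Let b and b' be unimodular symmetric bilinear forms over ℤ on ℤ^h. If there exist n : ℕ and a ℤ-linear isometry between b ⊕ H^{⊕n} (on (Fin h → ℤ) × (Fin 2 → ℤ)^n) and b' ⊕ H^{⊕n}, then there exist m : ℕ and a ℤ-linear isometry between b^nd_ext ⊕ H^{⊕m} (on K_b × (Fin 2 → ℤ)^m) and (b')^nd_ext ⊕ H^{⊕m}. In other words, if b and b' are stably isometric, then their exterior non-degenerate forms are stably isometric. -/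
/-- The hyperbolic form `H` over `ℤ` on `ℤ² = Fin 2 → ℤ`. -/
def hypForm (x y : Fin 2 → ℤ) : ℤ := x 0 * y 1 + x 1 * y 0

/-- The exterior submodule `K_b = {x | Even (b x x)}` of a symmetric bilinear form `b`. -/
def extSub {h : ℕ} (b : (Fin h → ℤ) →ₗ[ℤ] (Fin h → ℤ) →ₗ[ℤ] ℤ)
    (hsymm : ∀ x y, b x y = b y x) : Submodule ℤ (Fin h → ℤ) where
  carrier := {x | Even (b x x)}
  zero_mem' := by simp
  add_mem' := by
    intro x y hx hy
    have e : b (x + y) (x + y) = (b x x + b y y) + 2 * b x y := by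
      simp only [map_add, LinearMap.add_apply]
      rw [hsymm y x]; ring
    simp only [Set.mem_setOf_eq] at *
    rw [e]
    exact (hx.add hy).add (even_two_mul _)
  smul_mem' := by
    intro c x hx
    have e : b (c • x) (c • x) = c * (c * b x x) := by
      simp only [map_smul, LinearMap.smul_apply, smul_eq_mul]
    simp only [Set.mem_setOf_eq] at *
    rw [e]
    exact (hx.mul_left c).mul_left c

/-- The Gram matrix of a bilinear form on `ℤ^h` with respect to the standard basis. -/
def gram {h : ℕ} (b : (Fin h → ℤ) →ₗ[ℤ] (Fin h → ℤ) →ₗ[ℤ] ℤ) :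
    Matrix (Fin h) (Fin h) ℤ :=
  Matrix.of fun i j => b (Pi.single i 1) (Pi.single j 1)

/-! Every vector of `H^{⊕n}` has even square, so `b v.1 v.1` and the square of `v` in
`b ⊕ H^{⊕n}` have the same parity. An isometry of the stabilised forms therefore carries
`K_b × ℤ^{2n}` onto `K_{b'} × ℤ^{2n}`, and its restriction is the required isometry. -/

namespace LinearEquiv

variable {R M M' N : Type*} [Semiring R] [AddCommMonoid M] [AddCommMonoid M']
  [AddCommMonoid N] [Module R M] [Module R M'] [Module R N]

def restrictFst (e : (M × N) ≃ₗ[R] (M' × N)) (p : Submodule R M) (q : Submodule R M')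
    (he : ∀ v, v.1 ∈ p ↔ (e v).1 ∈ q) : (p × N) ≃ₗ[R] (q × N) where
  toFun v := (⟨(e (v.1, v.2)).1, (he _).1 v.1.2⟩, (e (v.1, v.2)).2)
  invFun v := (⟨(e.symm (v.1, v.2)).1, (he _).2 (by simp [v.1.2])⟩, (e.symm (v.1, v.2)).2)
  map_add' v w := by ext <;> simp [← Prod.mk_add_mk]
  map_smul' c v := by ext <;> simp [← Prod.smul_mk]
  left_inv v := by ext <;> simp
  right_inv v := by ext <;> simp

end LinearEquiv

theorem even_hypForm_self (x : Fin 2 → ℤ) : Even (hypForm x x) :=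
  ⟨x 0 * x 1, by unfold hypForm; ring⟩

theorem mem_extSub_iff_even_add_sum_hypForm {h n : ℕ}
    (b : (Fin h → ℤ) →ₗ[ℤ] (Fin h → ℤ) →ₗ[ℤ] ℤ) (hsymm : ∀ x y, b x y = b y x)
    (v : (Fin h → ℤ) × (Fin n → Fin 2 → ℤ)) :
    v.1 ∈ extSub b hsymm ↔ Even (b v.1 v.1 + ∑ k, hypForm (v.2 k) (v.2 k)) := by
  have hsum : Even (∑ k, hypForm (v.2 k) (v.2 k)) :=
    Finset.even_sum _ fun k _ => even_hypForm_self (v.2 k)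
  simp only [Int.even_add, hsum, iff_true]
  rfl

theorem stmt2_general (h : ℕ) (b b' : (Fin h → ℤ) →ₗ[ℤ] (Fin h → ℤ) →ₗ[ℤ] ℤ)
    (hsymm : ∀ x y, b x y = b y x) (hsymm' : ∀ x y, b' x y = b' y x)
    (hstab : ∃ (n : ℕ)
      (e : ((Fin h → ℤ) × (Fin n → Fin 2 → ℤ)) ≃ₗ[ℤ] ((Fin h → ℤ) × (Fin n → Fin 2 → ℤ))),
      ∀ v w : (Fin h → ℤ) × (Fin n → Fin 2 → ℤ),
        b' (e v).1 (e w).1 + ∑ k, hypForm ((e v).2 k) ((e w).2 k)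
          = b v.1 w.1 + ∑ k, hypForm (v.2 k) (w.2 k)) :
    ∃ (m : ℕ)
      (e : (↥(extSub b hsymm) × (Fin m → Fin 2 → ℤ)) ≃ₗ[ℤ]
           (↥(extSub b' hsymm') × (Fin m → Fin 2 → ℤ))),
      ∀ v w : ↥(extSub b hsymm) × (Fin m → Fin 2 → ℤ),
        b' ((e v).1 : Fin h → ℤ) ((e w).1 : Fin h → ℤ)
            + ∑ k, hypForm ((e v).2 k) ((e w).2 k)
          = b (v.1 : Fin h → ℤ) (w.1 : Fin h → ℤ) + ∑ k, hypForm (v.2 k) (w.2 k) := by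
  obtain ⟨n, e, he⟩ := hstab
  have hext (v) : v.1 ∈ extSub b hsymm ↔ (e v).1 ∈ extSub b' hsymm' := by
    rw [mem_extSub_iff_even_add_sum_hypForm, mem_extSub_iff_even_add_sum_hypForm, he]
  exact ⟨n, e.restrictFst _ _ hext, fun v w => he (v.1, v.2) (w.1, w.2)⟩

/-- If two unimodular symmetric bilinear forms `b, b'` on `ℤ^h` are
stably isometric (isometric after adding `n` hyperbolic summands), then their exterior
non-degenerate forms `b^nd_ext` and `(b')^nd_ext` are stably isometric. -/
theorem stmt2 (h : ℕ) (b b' : (Fin h → ℤ) →ₗ[ℤ] (Fin h → ℤ) →ₗ[ℤ] ℤ)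
    (hsymm : ∀ x y, b x y = b y x) (hsymm' : ∀ x y, b' x y = b' y x)
    (huni : (gram b).det = 1 ∨ (gram b).det = -1)
    (huni' : (gram b').det = 1 ∨ (gram b').det = -1)
    (hstab : ∃ (n : ℕ)
      (e : ((Fin h → ℤ) × (Fin n → Fin 2 → ℤ)) ≃ₗ[ℤ] ((Fin h → ℤ) × (Fin n → Fin 2 → ℤ))),
      ∀ v w : (Fin h → ℤ) × (Fin n → Fin 2 → ℤ),
        b' (e v).1 (e w).1 + ∑ k, hypForm ((e v).2 k) ((e w).2 k)
          = b v.1 w.1 + ∑ k, hypForm (v.2 k) (w.2 k)) :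
    ∃ (m : ℕ)
      (e : (↥(extSub b hsymm) × (Fin m → Fin 2 → ℤ)) ≃ₗ[ℤ]
           (↥(extSub b' hsymm') × (Fin m → Fin 2 → ℤ))),
      ∀ v w : ↥(extSub b hsymm) × (Fin m → Fin 2 → ℤ),
        b' ((e v).1 : Fin h → ℤ) ((e w).1 : Fin h → ℤ)
            + ∑ k, hypForm ((e v).2 k) ((e w).2 k)
          = b (v.1 : Fin h → ℤ) (w.1 : Fin h → ℤ) + ∑ k, hypForm (v.2 k) (w.2 k) :=
  stmt2_general h b b' hsymm hsymm' hstab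
end

section
/- Let M be a finitely generated R-module that is torsion-free as a ℤ-module, and let λ : M →ₗ[R] M →ₗ[R] R be a symmetric R-bilinear form. Then there exists a unique pair (λ₊, λ₋), where λ₊ is a symmetric ℤ-bilinear form on M ⧸ M₋ valued in ℤ and λ₋ is a symmetric ℤ-bilinear form on M ⧸ M₊ valued in ℤ, such that for all x, y ∈ M: 2 • λ x y = (1 + T) * ι (λ₊ [x]₋ [y]₋) + (1 − T) * ι (λ₋ [x]₊ [y]₊), where [x]₋ denotes the class of x in M ⧸ M₋ and [x]₊ the class of x in M ⧸ M₊. (First assertion of the Hambleton–Riehm pullback theorem.) -/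
/-- The group ring `R = ℤ[ℤ₂]`. -/
abbrev Rg : Type := MonoidAlgebra ℤ (Multiplicative (ZMod 2))

/-- The generator `T ∈ R` of `ℤ₂` (so `T² = 1`). -/
noncomputable def Tg : Rg := MonoidAlgebra.of ℤ (Multiplicative (ZMod 2)) (Multiplicative.ofAdd 1)

/-- Multiplication by `T` as a `ℤ`-linear endomorphism of an `R`-module `M`. -/
noncomputable def tEnd (M : Type*) [AddCommGroup M] [Module Rg M] : M →ₗ[ℤ] M :=
  (LinearMap.lsmul Rg M Tg).restrictScalars ℤ

/-- The `ℤ`-submodule `M₊ = {x | T • x = x}`. -/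
noncomputable def posP (M : Type*) [AddCommGroup M] [Module Rg M] : Submodule ℤ M :=
  (LinearMap.ker (tEnd M - LinearMap.id)).copy {x | Tg • x = x}
    (by ext x; simp [tEnd, LinearMap.mem_ker, sub_eq_zero])

/-- The `ℤ`-submodule `M₋ = {x | T • x = -x}`. -/
noncomputable def negP (M : Type*) [AddCommGroup M] [Module Rg M] : Submodule ℤ M :=
  (LinearMap.ker (tEnd M + LinearMap.id)).copy {x | Tg • x = -x}
    (by ext x; simp [tEnd, LinearMap.mem_ker, add_eq_zero_iff_eq_neg])

/- Auxiliary material -/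

/-- Coefficient extraction. -/
noncomputable def cf (g : Multiplicative (ZMod 2)) : Rg →ₗ[ℤ] ℤ :=
  (Finsupp.lapply g).comp (MonoidAlgebra.coeffLinearEquiv ℤ).toLinearMap

noncomputable abbrev tgen : Multiplicative (ZMod 2) := Multiplicative.ofAdd 1

lemma alg_single (m : ℤ) : algebraMap ℤ Rg m = MonoidAlgebra.single 1 m := by
  rw [MonoidAlgebra.coe_algebraMap]; rfl

lemma T_alg_single (m : ℤ) : Tg * algebraMap ℤ Rg m = MonoidAlgebra.single tgen m := by
  rw [alg_single, Tg, MonoidAlgebra.of_apply]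
  show MonoidAlgebra.single _ _ * MonoidAlgebra.single _ _ = _
  rw [MonoidAlgebra.single_mul_single, mul_one, one_mul]

lemma cf_alg_one (m : ℤ) : cf 1 (algebraMap ℤ Rg m) = m := by
  rw [alg_single]; show (Finsupp.single 1 m) 1 = m; simp

lemma cf_alg_t (m : ℤ) : cf tgen (algebraMap ℤ Rg m) = 0 := by
  rw [alg_single]
  exact Finsupp.single_eq_of_ne (by decide)

lemma cf_T_mul (g : Multiplicative (ZMod 2)) (r : Rg) :
    cf g (Tg * r) = cf (tgen * g) r := by
  show (Tg * r).coeff g = r.coeff _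
  rw [Tg, MonoidAlgebra.of_apply, MonoidAlgebra.coeff_single_mul_apply,
      (by decide : (Multiplicative.ofAdd (1 : ZMod 2))⁻¹ = tgen), one_mul]

lemma cf_T_mul_one (r : Rg) : cf 1 (Tg * r) = cf tgen r := by
  rw [cf_T_mul, mul_one]

lemma cf_T_mul_t (r : Rg) : cf tgen (Tg * r) = cf 1 r := by
  rw [cf_T_mul, show tgen * tgen = 1 from by decide]

lemma fin_decomp (r : Multiplicative (ZMod 2) →₀ ℤ) :
    r = Finsupp.single 1 (r 1) + Finsupp.single tgen (r tgen) := by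
  ext g
  rcases (by decide : ∀ h : Multiplicative (ZMod 2), h = 1 ∨ h = tgen) g with rfl | rfl <;>
    simp [Finsupp.single_apply,
      (by decide : (1 : Multiplicative (ZMod 2)) ≠ tgen),
      (by decide : tgen ≠ (1 : Multiplicative (ZMod 2)))]

lemma Rg_decomp (r : Rg) :
    r = algebraMap ℤ Rg (cf 1 r) + Tg * algebraMap ℤ Rg (cf tgen r) := by
  rw [alg_single, T_alg_single]
  exact MonoidAlgebra.coeff_injective (fin_decomp r.coeff)

lemma decomp_inj {m n m' n' : ℤ}
    (h : algebraMap ℤ Rg m + Tg * algebraMap ℤ Rg n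
       = algebraMap ℤ Rg m' + Tg * algebraMap ℤ Rg n') : m = m' ∧ n = n' := by
  have h1 := congrArg (cf 1) h
  have h2 := congrArg (cf tgen) h
  simp only [map_add, cf_alg_one, cf_alg_t, cf_T_mul_one, cf_T_mul_t, add_zero, zero_add] at h1 h2
  exact ⟨h1, h2⟩

lemma expand_eq (m n : ℤ) :
    (1 + Tg) * algebraMap ℤ Rg m + (1 - Tg) * algebraMap ℤ Rg n
      = algebraMap ℤ Rg (m + n) + Tg * algebraMap ℤ Rg (m - n) := by
  rw [map_add, map_sub]; ring

lemma two_smul_decomp (r : Rg) :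
    2 • r = algebraMap ℤ Rg (cf 1 r + cf 1 r) + Tg * algebraMap ℤ Rg (cf tgen r + cf tgen r) := by
  nth_rewrite 1 [Rg_decomp r]
  rw [two_smul, map_add, map_add, mul_add]
  ring_nf

section Bil

variable {M : Type*} [AddCommGroup M] [Module Rg M]

/-- The `g`-coefficient of an `R`-bilinear form, as a `ℤ`-bilinear form. -/
noncomputable def coeffBil (lam : M →ₗ[Rg] M →ₗ[Rg] Rg) (g : Multiplicative (ZMod 2)) :
    M →ₗ[ℤ] M →ₗ[ℤ] ℤ where
  toFun x := (cf g).comp ((lam x).restrictScalars ℤ)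
  map_add' x y := by ext z; simp
  map_smul' n x := by ext z; simp [← zsmul_eq_mul, map_zsmul, smul_eq_mul]

@[simp] lemma coeffBil_apply (lam : M →ₗ[Rg] M →ₗ[Rg] Rg) (g : Multiplicative (ZMod 2))
    (x y : M) : coeffBil lam g x y = cf g (lam x y) := rfl

/-- Descend a bilinear form vanishing on a submodule to the quotient. -/
noncomputable def descend (N : Submodule ℤ M) (f : M →ₗ[ℤ] M →ₗ[ℤ] ℤ)
    (h : ∀ x y, y ∈ N → f x y = 0) (hs : ∀ x y, f x y = f y x) :
    (M ⧸ N) →ₗ[ℤ] (M ⧸ N) →ₗ[ℤ] ℤ :=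
  Submodule.liftQ N
    { toFun := fun x => Submodule.liftQ N (f x) (fun y hy => h x y hy)
      map_add' := fun x y => by apply Submodule.linearMap_qext; ext z; simp; rfl
      map_smul' := fun n x => by apply Submodule.linearMap_qext; ext z; simp; exact Or.inl rfl }
    (by
      intro x hx
      rw [LinearMap.mem_ker]
      apply Submodule.linearMap_qext
      ext z
      change f x z = 0
      simp [hs x z, h z x hx])

@[simp] lemma descend_apply (N : Submodule ℤ M) (f : M →ₗ[ℤ] M →ₗ[ℤ] ℤ)
    (h : ∀ x y, y ∈ N → f x y = 0) (hs : ∀ x y, f x y = f y x) (x y : M) :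
    descend N f h hs (Submodule.Quotient.mk x) (Submodule.Quotient.mk y) = f x y := rfl

end Bil

/-- first assertion of the Hambleton–Riehm pullback theorem: for a
finitely generated `R = ℤ[ℤ₂]`-module `M`, torsion-free over `ℤ`, and a symmetric
`R`-bilinear form `λ` on `M`, there is a unique pair `(λ₊, λ₋)` of symmetric
`ℤ`-valued bilinear forms on `M ⧸ M₋` and `M ⧸ M₊` such that
`2 • λ x y = (1 + T) * ι (λ₊ [x]₋ [y]₋) + (1 - T) * ι (λ₋ [x]₊ [y]₊)` for all `x, y`. -/
theorem stmt4 (M : Type*) [AddCommGroup M] [Module Rg M] [Module.Finite Rg M]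
    (htf : ∀ (n : ℤ) (x : M), n • x = 0 → n = 0 ∨ x = 0)
    (lam : M →ₗ[Rg] M →ₗ[Rg] Rg) (hsymm : ∀ x y, lam x y = lam y x) :
    ∃! p : ((M ⧸ negP M) →ₗ[ℤ] (M ⧸ negP M) →ₗ[ℤ] ℤ) ×
           ((M ⧸ posP M) →ₗ[ℤ] (M ⧸ posP M) →ₗ[ℤ] ℤ),
      (∀ a b, p.1 a b = p.1 b a) ∧ (∀ a b, p.2 a b = p.2 b a) ∧
      (∀ x y : M,
        2 • lam x y
          = (1 + Tg) * algebraMap ℤ Rg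
              (p.1 (Submodule.Quotient.mk x) (Submodule.Quotient.mk y))
          + (1 - Tg) * algebraMap ℤ Rg
              (p.2 (Submodule.Quotient.mk x) (Submodule.Quotient.mk y))) := by
  classical
  set A := coeffBil lam 1 with hA
  set B := coeffBil lam tgen with hB
  -- symmetry of the coefficient forms
  have hAs : ∀ x y : M, A x y = A y x := fun x y => by simp [hA, hsymm x y]
  have hBs : ∀ x y : M, B x y = B y x := fun x y => by simp [hB, hsymm x y]
  -- behavior under T in the second argument
  have hT : ∀ x y : M, lam x (Tg • y) = Tg * lam x y := by
    intro x y
    rw [(lam x).map_smul, smul_eq_mul]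
  -- λ₊ = A + B vanishes when second argument is in M₋
  have hplus : ∀ x y : M, y ∈ negP M → (A + B) x y = 0 := by
    intro x y hy
    have hy' : Tg • y = -y := hy
    have h1 : lam x (-y) = Tg * lam x y := by rw [← hy', hT]
    rw [map_neg] at h1
    have h2 := congrArg (cf 1) h1
    rw [map_neg, cf_T_mul_one] at h2
    simp only [LinearMap.add_apply, hA, hB, coeffBil_apply]
    omega
  -- λ₋ = A - B vanishes when second argument is in M₊
  have hminus : ∀ x y : M, y ∈ posP M → (A - B) x y = 0 := by
    intro x y hy
    have hy' : Tg • y = y := hy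
    have h1 : lam x y = Tg * lam x y := by nth_rewrite 1 [← hy', hT]; rfl
    have h2 := congrArg (cf 1) h1
    rw [cf_T_mul_one] at h2
    simp only [LinearMap.sub_apply, hA, hB, coeffBil_apply]
    omega
  have hABs : ∀ x y : M, (A + B) x y = (A + B) y x := by
    intro x y; simp [hAs x y, hBs x y]
  have hABs' : ∀ x y : M, (A - B) x y = (A - B) y x := by
    intro x y; simp [hAs x y, hBs x y]
  refine ⟨⟨descend (negP M) (A + B) hplus hABs, descend (posP M) (A - B) hminus hABs'⟩,
    ⟨?_, ?_, ?_⟩, ?_⟩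
  · intro a b
    obtain ⟨x, rfl⟩ := Submodule.Quotient.mk_surjective _ a
    obtain ⟨y, rfl⟩ := Submodule.Quotient.mk_surjective _ b
    rw [descend_apply, descend_apply]; exact hABs x y
  · intro a b
    obtain ⟨x, rfl⟩ := Submodule.Quotient.mk_surjective _ a
    obtain ⟨y, rfl⟩ := Submodule.Quotient.mk_surjective _ b
    rw [descend_apply, descend_apply]; exact hABs' x y
  · intro x y
    rw [descend_apply, descend_apply, expand_eq]
    simp only [LinearMap.add_apply, LinearMap.sub_apply, hA, hB, coeffBil_apply]
    rw [two_smul_decomp]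
    congr 1
    · congr 1; ring
    · congr 1; ring
  · rintro ⟨q1, q2⟩ ⟨-, -, hq⟩
    have key : ∀ x y : M,
        q1 (Submodule.Quotient.mk x) (Submodule.Quotient.mk y) = (A + B) x y ∧
        q2 (Submodule.Quotient.mk x) (Submodule.Quotient.mk y) = (A - B) x y := by
      intro x y
      have h1 := hq x y
      rw [expand_eq, two_smul_decomp] at h1
      obtain ⟨e1, e2⟩ := decomp_inj h1
      simp only [LinearMap.add_apply, LinearMap.sub_apply, hA, hB, coeffBil_apply] at *
      omega
    refine Prod.ext ?_ ?_
    · apply LinearMap.ext; intro a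
      obtain ⟨x, rfl⟩ := Submodule.Quotient.mk_surjective _ a
      apply LinearMap.ext; intro b
      obtain ⟨y, rfl⟩ := Submodule.Quotient.mk_surjective _ b
      rw [(key x y).1]; simp
    · apply LinearMap.ext; intro a
      obtain ⟨x, rfl⟩ := Submodule.Quotient.mk_surjective _ a
      apply LinearMap.ext; intro b
      obtain ⟨y, rfl⟩ := Submodule.Quotient.mk_surjective _ b
      rw [(key x y).2]; simp
end

section
/- Let M be a finitely generated R-module that is torsion-free as a ℤ-module. Let λ₊ be a symmetric ℤ-bilinear form on M ⧸ M₋ valued in ℤ and λ₋ a symmetric ℤ-bilinear form on M ⧸ M₊ valued in ℤ, and assume the mod-2 compatibility: for all x, y ∈ M, λ₊ [x]₋ [y]₋ ≡ λ₋ [x]₊ [y]₊ (mod 2). Then there exists a unique symmetric R-bilinear form λ : M →ₗ[R] M →ₗ[R] R such that for all x, y ∈ M: 2 • λ x y = (1 + T) * ι (λ₊ [x]₋ [y]₋) + (1 − T) * ι (λ₋ [x]₊ [y]₊). (Second assertion of the Hambleton–Riehm pullback theorem.) -/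
lemma Tg_mul_Tg : Tg * Tg = 1 := by
  rw [Tg, ← map_mul,
    show (Multiplicative.ofAdd (1 : ZMod 2)) * (Multiplicative.ofAdd 1) = 1 from by decide,
    map_one]

lemma Rg.two_smul_inj {a b : Rg} (h : 2 • a = 2 • b) : a = b := by
  apply MonoidAlgebra.ext
  apply Finsupp.ext
  intro g
  rw [two_nsmul, two_nsmul] at h
  have h2 : (a + a).coeff g = (b + b).coeff g := by rw [h]
  simp only [MonoidAlgebra.coeff_add, Finsupp.add_apply] at h2
  have : (a.coeff g : ℤ) + a.coeff g = b.coeff g + b.coeff g := h2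
  omega

section Aux
variable {M : Type*} [AddCommGroup M] [Module Rg M]

lemma mk_neg_Tg_smul (x : M) :
    (Submodule.Quotient.mk (Tg • x) : M ⧸ negP M) = Submodule.Quotient.mk x := by
  rw [Submodule.Quotient.eq]
  show Tg • (Tg • x - x) = -(Tg • x - x)
  rw [smul_sub, smul_smul, Tg_mul_Tg, one_smul, neg_sub]

lemma mk_pos_Tg_smul (x : M) :
    (Submodule.Quotient.mk (Tg • x) : M ⧸ posP M) = -Submodule.Quotient.mk x := by
  rw [← Submodule.Quotient.mk_neg, Submodule.Quotient.eq]
  show Tg • (Tg • x - -x) = Tg • x - -x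
  rw [sub_neg_eq_add, smul_add, smul_smul, Tg_mul_Tg, one_smul, add_comm]

lemma of_cases (g : Multiplicative (ZMod 2)) :
    MonoidAlgebra.of ℤ (Multiplicative (ZMod 2)) g = 1 ∨
    MonoidAlgebra.of ℤ (Multiplicative (ZMod 2)) g = Tg := by
  rcases (by decide : ∀ z : Multiplicative (ZMod 2), z = 1 ∨ z = Multiplicative.ofAdd 1) g with
    h | h
  · left; rw [h, map_one]
  · right; rw [h]; rfl

end Aux

/-- second assertion of the Hambleton–Riehm pullback theorem: given
symmetric `ℤ`-valued bilinear forms `λ₊` on `M ⧸ M₋` and `λ₋` on `M ⧸ M₊` that are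
compatible mod 2, there is a unique symmetric `R = ℤ[ℤ₂]`-bilinear form `λ` on `M` with
`2 • λ x y = (1 + T) * ι (λ₊ [x]₋ [y]₋) + (1 - T) * ι (λ₋ [x]₊ [y]₊)` for all `x, y`. -/
theorem stmt5 (M : Type*) [AddCommGroup M] [Module Rg M] [Module.Finite Rg M]
    (htf : ∀ (n : ℤ) (x : M), n • x = 0 → n = 0 ∨ x = 0)
    (lp : (M ⧸ negP M) →ₗ[ℤ] (M ⧸ negP M) →ₗ[ℤ] ℤ)
    (lm : (M ⧸ posP M) →ₗ[ℤ] (M ⧸ posP M) →ₗ[ℤ] ℤ)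
    (hlp : ∀ a b, lp a b = lp b a) (hlm : ∀ a b, lm a b = lm b a)
    (hcomp : ∀ x y : M,
      lp (Submodule.Quotient.mk x) (Submodule.Quotient.mk y)
        ≡ lm (Submodule.Quotient.mk x) (Submodule.Quotient.mk y) [ZMOD 2]) :
    ∃! lam : M →ₗ[Rg] M →ₗ[Rg] Rg,
      (∀ x y, lam x y = lam y x) ∧
      (∀ x y : M,
        2 • lam x y
          = (1 + Tg) * algebraMap ℤ Rg
              (lp (Submodule.Quotient.mk x) (Submodule.Quotient.mk y))
          + (1 - Tg) * algebraMap ℤ Rg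
              (lm (Submodule.Quotient.mk x) (Submodule.Quotient.mk y))) := by
  set ι := algebraMap ℤ Rg with hι
  set P : M → M → ℤ := fun x y => lp (Submodule.Quotient.mk x) (Submodule.Quotient.mk y)
    with hP
  set Q : M → M → ℤ := fun x y => lm (Submodule.Quotient.mk x) (Submodule.Quotient.mk y)
    with hQ
  set c : M → M → Rg := fun x y => (1 + Tg) * ι (P x y) + (1 - Tg) * ι (Q x y) with hc
  -- basic properties of P and Q
  have hPsymm : ∀ x y, P x y = P y x := fun x y => hlp _ _
  have hQsymm : ∀ x y, Q x y = Q y x := fun x y => hlm _ _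
  have hPadd : ∀ x x' y, P (x + x') y = P x y + P x' y := by
    intro x x' y; simp [hP, Submodule.Quotient.mk_add]
  have hQadd : ∀ x x' y, Q (x + x') y = Q x y + Q x' y := by
    intro x x' y; simp [hQ, Submodule.Quotient.mk_add]
  have hPzsmul : ∀ (n : ℤ) x y, P (n • x) y = n * P x y := by
    intro n x y; simp [hP, Submodule.Quotient.mk_smul]
  have hQzsmul : ∀ (n : ℤ) x y, Q (n • x) y = n * Q x y := by
    intro n x y; simp [hQ, Submodule.Quotient.mk_smul]
  have hPT : ∀ x y, P (Tg • x) y = P x y := by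
    intro x y; simp [hP, mk_neg_Tg_smul]
  have hQT : ∀ x y, Q (Tg • x) y = -Q x y := by
    intro x y; simp [hQ, mk_pos_Tg_smul]
  -- c properties
  have hcsymm : ∀ x y, c x y = c y x := by
    intro x y; rw [hc]; simp only; rw [hPsymm, hQsymm]
  have hcadd : ∀ x x' y, c (x + x') y = c x y + c x' y := by
    intro x x' y
    simp only [hc, hPadd, hQadd, map_add]
    ring
  have hczsmul : ∀ (n : ℤ) x y, c (n • x) y = n • c x y := by
    intro n x y
    simp only [hc, hPzsmul, hQzsmul, zsmul_eq_mul, eq_intCast]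
    push_cast
    ring
  have hcT : ∀ x y, c (Tg • x) y = Tg * c x y := by
    intro x y
    simp only [hc, hPT, hQT, map_neg]
    linear_combination (ι (Q x y) - ι (P x y)) * Tg_mul_Tg
  -- existence of the half
  have hhalf : ∀ x y, ∃ r : Rg, 2 • r = c x y := by
    intro x y
    obtain ⟨k, hk⟩ := (hcomp x y).dvd
    refine ⟨ι (P x y + k) - ι k * Tg, ?_⟩
    have hQk : Q x y = P x y + 2 * k := by
      have : Q x y - P x y = 2 * k := hk
      linarith
    rw [hc]
    simp only
    rw [hQk, two_nsmul]
    simp only [map_add, map_mul, map_ofNat]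
    ring
  choose f hf using hhalf
  -- derived properties of f
  have hfsymm : ∀ x y, f x y = f y x := by
    intro x y
    exact Rg.two_smul_inj (by rw [hf, hf, hcsymm])
  have hfadd : ∀ x x' y, f (x + x') y = f x y + f x' y := by
    intro x x' y
    exact Rg.two_smul_inj (by rw [smul_add, hf, hf, hf, hcadd])
  have hfzsmul : ∀ (n : ℤ) x y, f (n • x) y = n • f x y := by
    intro n x y
    refine Rg.two_smul_inj ?_
    rw [hf, hczsmul, smul_comm, hf]
  have hfT : ∀ x y, f (Tg • x) y = Tg * f x y := by
    intro x y
    refine Rg.two_smul_inj ?_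
    rw [hf, hcT, ← mul_smul_comm, hf]
  have key : ∀ (r : Rg) (x y : M), f (r • x) y = r • f x y := by
    intro r
    induction r using MonoidAlgebra.induction_on with
    | of g =>
      intro x y
      rcases of_cases g with h | h
      · rw [h, one_smul, one_smul]
      · rw [h, hfT, smul_eq_mul]
    | add p q hp hq =>
      intro x y
      rw [add_smul, hfadd, hp, hq, add_smul]
    | smul n p hp =>
      intro x y
      rw [smul_assoc, hfzsmul, hp, smul_assoc]
  have key2 : ∀ (r : Rg) (x y : M), f x (r • y) = r • f x y := by
    intro r x y
    rw [hfsymm, key, hfsymm y x]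
  have key2add : ∀ x y y', f x (y + y') = f x y + f x y' := by
    intro x y y'
    rw [hfsymm, hfadd, hfsymm y x, hfsymm y' x]
  refine ⟨LinearMap.mk₂ Rg f hfadd (fun r x y => key r x y) key2add (fun r x y => key2 r x y),
    ⟨?_, ?_⟩, ?_⟩
  · intro x y
    simp only [LinearMap.mk₂_apply]
    exact hfsymm x y
  · intro x y
    simp only [LinearMap.mk₂_apply]
    exact hf x y
  · intro l hl
    refine LinearMap.ext fun x => LinearMap.ext fun y => ?_
    refine Rg.two_smul_inj ?_
    rw [hl.2 x y]
    simp only [LinearMap.mk₂_apply]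
    exact (hf x y).symm
end

section
/- Let n : ℕ and work with the index type Fin n ⊕ Fin 2. Let G : Matrix (Fin n ⊕ Fin 2) (Fin n ⊕ Fin 2) ℤ be the block diagonal matrix that is zero on the Fin n block, zero on the mixed blocks, and equal to the hyperbolic matrix J (J (inr 0) (inr 1) = J (inr 1) (inr 0) = 1, J (inr 0) (inr 0) = J (inr 1) (inr 1) = 0) on the Fin 2 block; let G₂ be its reduction mod 2. Suppose P is an invertible matrix over ZMod 2 of this size with Pᵀ * G₂ * P = G₂, and suppose the 2×2 block of P indexed by Fin 2 × Fin 2 is the identity or the swap matrix. Then there exists a matrix Q over ℤ, invertible over ℤ (its determinant is a unit), with Qᵀ * G * Q = G and whose reduction mod 2 equals P. -/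
/-!
Only the last two rows of a matrix meet the hyperbolic block of `0^{⊕n} ⊕ H`, so the isometry
condition for `P = [[A, B], [C, D]]` reads `[[CᵀJC, CᵀJD], [DᵀJC, DᵀJD]] = [[0, 0], [0, J]]`.
As `D` is `1` or `J`, `DᵀJ` is invertible and `C = 0`; conversely every block upper-triangular
matrix with `DᵀJD = J` is an isometry. It remains to lift the diagonal blocks: `D` lifts to
itself, and `A` lifts to `GL_n(ℤ)` because `GL_n(𝔽₂)` is generated by transvections.
-/

open Matrix

/-- The Gram matrix of the form `0^{⊕n} ⊕ H` on the index type `Fin n ⊕ Fin 2`: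
zero on the `Fin n` block and on the mixed blocks, hyperbolic on the `Fin 2` block. -/
def Gmat (n : ℕ) : Matrix (Fin n ⊕ Fin 2) (Fin n ⊕ Fin 2) ℤ :=
  Matrix.fromBlocks 0 0 0 !![0, 1; 1, 0]

namespace Matrix

theorem exists_isUnit_det_map_eq {R K m : Type*} [CommRing R] [Field K] [Fintype m]
    [DecidableEq m] (f : R →+* K) (hf : Function.Surjective f)
    (hunit : ∀ x : K, x ≠ 0 → ∃ u : R, IsUnit u ∧ f u = x)
    (M : Matrix m m K) (hM : M.det ≠ 0) :
    ∃ N : Matrix m m R, IsUnit N.det ∧ N.map f = M := by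
  refine diagonal_transvection_induction_of_det_ne_zero
    (fun M => ∃ N : Matrix m m R, IsUnit N.det ∧ N.map f = M) M hM ?_ ?_ ?_
  · intro d hd
    have hd0 : ∀ i, d i ≠ 0 := fun i h =>
      hd (by rw [det_diagonal]; exact Finset.prod_eq_zero (Finset.mem_univ i) h)
    choose u hu hfu using fun i => hunit (d i) (hd0 i)
    refine ⟨diagonal u, ?_, ?_⟩
    · rw [det_diagonal]; exact IsUnit.prod_univ_iff.mpr hu
    · rw [diagonal_map (map_zero f)]; exact congrArg diagonal (funext hfu)
  · rintro ⟨i, j, hij, c⟩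
    obtain ⟨c, rfl⟩ := hf c
    refine ⟨transvection i j c, by simp [det_transvection_of_ne i j hij], ?_⟩
    simp [transvection, TransvectionStruct.toMatrix, Matrix.map_add, map_one]
  · rintro _ _ - - ⟨M, hM, rfl⟩ ⟨N, hN, rfl⟩
    exact ⟨M * N, by rw [det_mul]; exact hM.mul hN, Matrix.map_mul⟩

theorem exists_isUnit_det_map_intCast_eq_of_zmod_two {m : Type*} [Fintype m] [DecidableEq m]
    (M : Matrix m m (ZMod 2)) (hM : IsUnit M.det) :
    ∃ N : Matrix m m ℤ, IsUnit N.det ∧ N.map (Int.cast : ℤ → ZMod 2) = M :=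
  exists_isUnit_det_map_eq (Int.castRingHom (ZMod 2)) ZMod.intCast_surjective
    (fun x _ => ⟨1, isUnit_one, by revert x; decide⟩) M hM.ne_zero

theorem swap_fin_two_mul_self {R : Type*} [Semiring R] :
    (!![0, 1; 1, 0] : Matrix (Fin 2) (Fin 2) R) * !![0, 1; 1, 0] = 1 := by
  simp [one_fin_two]

theorem swap_fin_two_transpose {R : Type*} [Zero R] [One R] :
    (!![0, 1; 1, 0] : Matrix (Fin 2) (Fin 2) R)ᵀ = !![0, 1; 1, 0] := by
  ext i j; fin_cases i <;> fin_cases j <;> rfl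

theorem swap_fin_two_map_intCast {R : Type*} [Ring R] :
    (!![0, 1; 1, 0] : Matrix (Fin 2) (Fin 2) ℤ).map (Int.cast : ℤ → R) = !![0, 1; 1, 0] := by
  ext i j; fin_cases i <;> fin_cases j <;> simp

section Isometry

variable {l m α : Type*} [Fintype l] [Fintype m] [CommRing α]

theorem fromBlocks_transpose_mul_fromBlocks_zero_mul (A : Matrix l l α) (B : Matrix l m α)
    (C : Matrix m l α) (D J : Matrix m m α) :
    (fromBlocks A B C D)ᵀ * fromBlocks 0 0 0 J * fromBlocks A B C D
      = fromBlocks (Cᵀ * J * C) (Cᵀ * J * D) (Dᵀ * J * C) (Dᵀ * J * D) := by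
  simp [fromBlocks_transpose, fromBlocks_multiply, Matrix.mul_assoc]

theorem eq_zero_of_fromBlocks_isometry [DecidableEq m] {A : Matrix l l α} {B : Matrix l m α}
    {C : Matrix m l α} {D J : Matrix m m α}
    (hiso : (fromBlocks A B C D)ᵀ * fromBlocks 0 0 0 J * fromBlocks A B C D
      = fromBlocks 0 0 0 J)
    (hDJ : IsUnit (Dᵀ * J).det) : C = 0 := by
  rw [fromBlocks_transpose_mul_fromBlocks_zero_mul] at hiso
  rw [← nonsing_inv_mul_cancel_left _ C hDJ, (fromBlocks_inj.mp hiso).2.2.1, Matrix.mul_zero]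

theorem fromBlocks_zero₂₁_isometry (A : Matrix l l α) (B : Matrix l m α) {D J : Matrix m m α}
    (hD : Dᵀ * J * D = J) :
    (fromBlocks A B 0 D)ᵀ * fromBlocks 0 0 0 J * fromBlocks A B 0 D = fromBlocks 0 0 0 J := by
  rw [fromBlocks_transpose_mul_fromBlocks_zero_mul, hD]
  simp

end Isometry

end Matrix

theorem Gmat_map_intCast (n : ℕ) (R : Type*) [Ring R] :
    (Gmat n).map (Int.cast : ℤ → R) = fromBlocks 0 0 0 !![0, 1; 1, 0] := by
  rw [Gmat, fromBlocks_map, swap_fin_two_map_intCast]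
  simp

/-- an invertible mod-2 isometry `P` of `0^{⊕n} ⊕ H` whose hyperbolic
`2×2` block is the identity or the swap matrix lifts to an integral isometry `Q` of
`0^{⊕n} ⊕ H` (with `Q` invertible over `ℤ` and `Q ≡ P mod 2`). -/
theorem stmt11 (n : ℕ)
    (P : Matrix (Fin n ⊕ Fin 2) (Fin n ⊕ Fin 2) (ZMod 2))
    (hPinv : IsUnit P.det)
    (hiso : Pᵀ * (Gmat n).map (Int.cast : ℤ → ZMod 2) * P
      = (Gmat n).map (Int.cast : ℤ → ZMod 2))
    (hblock : P.submatrix Sum.inr Sum.inr = (1 : Matrix (Fin 2) (Fin 2) (ZMod 2)) ∨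
      P.submatrix Sum.inr Sum.inr = !![0, 1; 1, 0]) :
    ∃ Q : Matrix (Fin n ⊕ Fin 2) (Fin n ⊕ Fin 2) ℤ,
      IsUnit Q.det ∧ Qᵀ * Gmat n * Q = Gmat n ∧
      Q.map (Int.cast : ℤ → ZMod 2) = P := by
  obtain ⟨A, B, C, D, rfl⟩ : ∃ A B C D, P = fromBlocks A B C D :=
    ⟨_, _, _, _, (fromBlocks_toBlocks P).symm⟩
  change D = 1 ∨ D = !![0, 1; 1, 0] at hblock
  rw [Gmat_map_intCast] at hiso
  obtain rfl : C = 0 := eq_zero_of_fromBlocks_isometry hiso <| by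
    rcases hblock with rfl | rfl <;> simp [swap_fin_two_transpose, det_fin_two_of]
  rw [det_fromBlocks_zero₂₁] at hPinv
  obtain ⟨A', hA', rfl⟩ :=
    exists_isUnit_det_map_intCast_eq_of_zmod_two A (isUnit_of_mul_isUnit_left hPinv)
  obtain ⟨D', hD', hD'iso, rfl⟩ : ∃ D' : Matrix (Fin 2) (Fin 2) ℤ, IsUnit D'.det ∧
      D'ᵀ * !![0, 1; 1, 0] * D' = !![0, 1; 1, 0] ∧ D'.map (Int.cast : ℤ → ZMod 2) = D := by
    rcases hblock with rfl | rfl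
    · exact ⟨1, by simp, by simp, Matrix.map_one _ Int.cast_zero Int.cast_one⟩
    · refine ⟨!![0, 1; 1, 0], by simp, ?_, swap_fin_two_map_intCast⟩
      rw [swap_fin_two_transpose, swap_fin_two_mul_self, Matrix.one_mul]
  refine ⟨fromBlocks A' (B.map ZMod.cast) 0 D', ?_, fromBlocks_zero₂₁_isometry _ _ hD'iso, ?_⟩
  · rw [det_fromBlocks_zero₂₁]
    exact hA'.mul hD'
  · rw [fromBlocks_map]
    simp [Function.comp_def]
end

section
/- For h ≥ 1 let B_h : Matrix (Fin h) (Fin h) ℤ be the matrix with B_h 0 0 = 4, B_h 0 j = B_h j 0 = 2 for j ≠ 0, B_h i i = 2 for i ≠ 0, and B_h i j = 1 for distinct nonzero i, j. Then the cokernel (Fin h → ℤ) ⧸ range(mulVec B_h) is isomorphic as an abelian group to ZMod 4 when h is odd, and to ZMod 2 × ZMod 2 when h is even. (Equivalently, B_h has Smith normal form diag(1,…,1,4) for h odd and diag(1,…,1,2,2) for h even.) -/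
/-!
Write `h = n + 1` and `s x = x 1 + ⋯ + x n`. A vector `x` lies in the image of `B_h` exactly
when `x 0 = 2 c` is even and `(n + 1) c - s x` is even (a preimage is `(d, x 1 - c, …, x n - c)`
where `(n + 1) c - s x = 2 d`). For `h` odd this is the kernel of the surjection
`x ↦ x 0 + 2 s x` onto `ℤ/4`, for `h` even the kernel of the surjection `x ↦ (x 0, s x)`
onto `(ℤ/2)²`.
-/

/-- The matrix `B_h` of equation (1) of the paper: `B 0 0 = 4`, `B 0 j = B j 0 = 2`
for `j ≠ 0`, `B i i = 2` for `i ≠ 0`, and `B i j = 1` for distinct nonzero `i, j`. -/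
def Bmat (h : ℕ) : Matrix (Fin h) (Fin h) ℤ :=
  Matrix.of fun i j =>
    if i = j then (if (i : ℕ) = 0 then 4 else 2)
    else (if (i : ℕ) = 0 ∨ (j : ℕ) = 0 then 2 else 1)

namespace Bmat

variable {n : ℕ}

lemma succ_apply_zero_zero : Bmat (n + 1) 0 0 = 4 := rfl

lemma succ_apply_zero_succ (j : Fin n) : Bmat (n + 1) 0 j.succ = 2 := by
  simp [Bmat, (Fin.succ_ne_zero j).symm]

lemma succ_apply_succ_zero (i : Fin n) : Bmat (n + 1) i.succ 0 = 2 := by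
  simp [Bmat, Fin.succ_ne_zero i]

lemma succ_apply_succ_succ (i j : Fin n) :
    Bmat (n + 1) i.succ j.succ = 1 + if i = j then 1 else 0 := by
  by_cases hij : i = j <;> simp [Bmat, hij]

lemma succ_mulVec_zero (y : Fin (n + 1) → ℤ) :
    (Bmat (n + 1)).mulVec y 0 = 4 * y 0 + 2 * ∑ j : Fin n, y j.succ := by
  simp [Matrix.mulVec, dotProduct, Fin.sum_univ_succ, succ_apply_zero_zero,
    succ_apply_zero_succ, Finset.mul_sum]

lemma succ_mulVec_succ (y : Fin (n + 1) → ℤ) (k : Fin n) :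
    (Bmat (n + 1)).mulVec y k.succ = 2 * y 0 + (∑ j : Fin n, y j.succ) + y k.succ := by
  simp [Matrix.mulVec, dotProduct, Fin.sum_univ_succ, succ_apply_succ_zero,
    succ_apply_succ_succ, add_mul, Finset.sum_add_distrib, add_assoc]

lemma sum_succ_mulVec_succ (y : Fin (n + 1) → ℤ) :
    ∑ k : Fin n, (Bmat (n + 1)).mulVec y k.succ
      = 2 * n * y 0 + (n + 1) * ∑ j : Fin n, y j.succ := by
  simp only [succ_mulVec_succ, Finset.sum_add_distrib, Finset.sum_const, Finset.card_univ,
    Fintype.card_fin, nsmul_eq_mul]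
  ring

theorem mem_range_succ_iff (x : Fin (n + 1) → ℤ) :
    x ∈ LinearMap.range (Bmat (n + 1)).mulVecLin ↔
      ∃ c, x 0 = 2 * c ∧ 2 ∣ (n + 1) * c - ∑ j : Fin n, x j.succ := by
  constructor
  · rintro ⟨y, rfl⟩
    refine ⟨2 * y 0 + ∑ j : Fin n, y j.succ, ?_, y 0, ?_⟩
    · rw [Matrix.mulVecLin_apply, succ_mulVec_zero]; ring
    · rw [Matrix.mulVecLin_apply, sum_succ_mulVec_succ]; ring
  · rintro ⟨c, hc, d, hd⟩
    refine ⟨Fin.cons d fun k => x k.succ - c, funext fun i => ?_⟩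
    have hsum : ∑ j : Fin n, (Fin.cons d fun k => x k.succ - c : Fin (n + 1) → ℤ) j.succ
        = (∑ j : Fin n, x j.succ) - n * c := by
      simp [Finset.sum_sub_distrib, mul_comm]
    cases i using Fin.cases with
    | zero => rw [Matrix.mulVecLin_apply, succ_mulVec_zero, hsum, Fin.cons_zero]; linarith
    | succ k =>
      rw [Matrix.mulVecLin_apply, succ_mulVec_succ, hsum, Fin.cons_zero, Fin.cons_succ]
      linarith

end Bmat

theorem Submodule.nonempty_quotient_addEquiv_of_ker_eq {R M N : Type*} [Ring R]
    [AddCommGroup M] [Module R M] [AddCommGroup N] [Module R N] {p : Submodule R M}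
    (f : M →ₗ[R] N) (hf : Function.Surjective f) (hker : LinearMap.ker f = p) :
    Nonempty ((M ⧸ p) ≃+ N) :=
  ⟨((Submodule.quotEquivOfEq _ _ hker.symm).trans (f.quotKerEquivOfSurjective hf)).toAddEquiv⟩

noncomputable def tailSum (n : ℕ) : (Fin (n + 1) → ℤ) →ₗ[ℤ] ℤ :=
  ∑ j : Fin n, LinearMap.proj j.succ

@[simp]
lemma tailSum_apply {n : ℕ} (x : Fin (n + 1) → ℤ) : tailSum n x = ∑ j : Fin n, x j.succ := by
  simp [tailSum]

noncomputable def oddCokernelMap (n : ℕ) : (Fin (n + 1) → ℤ) →ₗ[ℤ] ZMod 4 :=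
  (Int.castAddHom (ZMod 4)).toIntLinearMap ∘ₗ (LinearMap.proj 0 + 2 • tailSum n)

lemma oddCokernelMap_apply {n : ℕ} (x : Fin (n + 1) → ℤ) :
    oddCokernelMap n x = ((x 0 + 2 * ∑ j : Fin n, x j.succ : ℤ) : ZMod 4) := by
  simp [oddCokernelMap]

lemma oddCokernelMap_surjective (n : ℕ) : Function.Surjective (oddCokernelMap n) := by
  intro z
  obtain ⟨a, rfl⟩ := ZMod.intCast_surjective z
  refine ⟨Pi.single 0 a, ?_⟩
  simp [oddCokernelMap_apply, Fin.succ_ne_zero]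

lemma ker_oddCokernelMap {n : ℕ} (hn : Even n) :
    LinearMap.ker (oddCokernelMap n) = LinearMap.range (Bmat (n + 1)).mulVecLin := by
  obtain ⟨m, rfl⟩ := hn
  ext x
  rw [LinearMap.mem_ker, Bmat.mem_range_succ_iff, oddCokernelMap_apply,
    ZMod.intCast_zmod_eq_zero_iff_dvd]
  set s := ∑ j : Fin (m + m), x j.succ
  push_cast
  constructor
  · rintro ⟨k, hk⟩
    exact ⟨2 * k - s, by linear_combination hk, 2 * m * k + k - m * s - s, by ring⟩
  · rintro ⟨c, hc, d, hd⟩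
    exact ⟨(m + 1) * c - d, by linear_combination hc - 2 * hd⟩

noncomputable def evenCokernelMap (n : ℕ) : (Fin (n + 1) → ℤ) →ₗ[ℤ] ZMod 2 × ZMod 2 :=
  ((Int.castAddHom (ZMod 2)).toIntLinearMap ∘ₗ LinearMap.proj 0).prod
    ((Int.castAddHom (ZMod 2)).toIntLinearMap ∘ₗ tailSum n)

lemma evenCokernelMap_apply {n : ℕ} (x : Fin (n + 1) → ℤ) :
    evenCokernelMap n x = ((x 0 : ZMod 2), ((∑ j : Fin n, x j.succ : ℤ) : ZMod 2)) := by
  simp [evenCokernelMap]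

lemma evenCokernelMap_surjective {n : ℕ} (hn : Odd n) :
    Function.Surjective (evenCokernelMap n) := by
  rintro ⟨z, w⟩
  obtain ⟨a, rfl⟩ := ZMod.intCast_surjective z
  obtain ⟨b, rfl⟩ := ZMod.intCast_surjective w
  obtain ⟨m, rfl⟩ := hn
  refine ⟨Fin.cons a fun _ => b, ?_⟩
  have htwo : (2 : ZMod 2) = 0 := rfl
  simp [evenCokernelMap_apply, htwo]

lemma ker_evenCokernelMap {n : ℕ} (hn : Odd n) :
    LinearMap.ker (evenCokernelMap n) = LinearMap.range (Bmat (n + 1)).mulVecLin := by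
  obtain ⟨m, rfl⟩ := hn
  ext x
  rw [LinearMap.mem_ker, Bmat.mem_range_succ_iff, evenCokernelMap_apply, Prod.mk_eq_zero,
    ZMod.intCast_zmod_eq_zero_iff_dvd, ZMod.intCast_zmod_eq_zero_iff_dvd]
  set s := ∑ j : Fin (2 * m + 1), x j.succ
  push_cast
  constructor
  · rintro ⟨⟨c, hc⟩, k, hk⟩
    exact ⟨c, hc, (m + 1) * c - k, by linear_combination -hk⟩
  · rintro ⟨c, hc, d, hd⟩
    exact ⟨⟨c, hc⟩, (m + 1) * c - d, by linear_combination -hd⟩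

/-- the cokernel of `B_h` is `ℤ/4` when `h` is odd and `ℤ/2 × ℤ/2` when
`h` is even (equivalently, `B_h` has Smith normal form `diag(1,…,1,4)` for `h` odd and
`diag(1,…,1,2,2)` for `h` even). -/
theorem stmt12 (h : ℕ) (hh : 1 ≤ h) :
    (Odd h → Nonempty
      (((Fin h → ℤ) ⧸ LinearMap.range (Bmat h).mulVecLin) ≃+ ZMod 4)) ∧
    (Even h → Nonempty
      (((Fin h → ℤ) ⧸ LinearMap.range (Bmat h).mulVecLin) ≃+ (ZMod 2 × ZMod 2))) := by
  obtain ⟨n, rfl⟩ := Nat.exists_eq_add_of_le' hh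
  refine ⟨fun hodd => ?_, fun heven => ?_⟩
  · have hn : Even n := Nat.not_odd_iff_even.mp (Nat.odd_add_one.mp hodd)
    exact Submodule.nonempty_quotient_addEquiv_of_ker_eq _ (oddCokernelMap_surjective n)
      (ker_oddCokernelMap hn)
  · have hn : Odd n := Nat.not_even_iff_odd.mp (Nat.even_add_one.mp heven)
    exact Submodule.nonempty_quotient_addEquiv_of_ker_eq _ (evenCokernelMap_surjective hn)
      (ker_evenCokernelMap hn)
end
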